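/- arXiv:2103.09117 — 3 statements merged into one kernel-verified Lean document; each statement's English description precedes it below -/
import Mathlib

section
/- If f is holomorphic on the horizontal strip {z : Im z ∈ (-b, -a)} (where a < b), satisfies an exponential growth bound |f(x - it)| ≤ C(t) e^{s|x|} for all x ∈ ℝ and t ∈ (a,b) with C locally bounded, and f is Lebesgue integrable on the lines ℝ - it₁ and ℝ - it₂ for some t₁, t₂ ∈ (a,b), then the contour integrals ∫_{ℝ - it₁} f(z) dz and ∫_{ℝ - it₂} f(z) dz are equal. -/
/-!
Multiply `f` by the Gaussian `exp (-ε z²)`, `ε > 0`. On the strip this factor has modulus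
`exp (-ε (x² - t²))`, which beats the growth `exp (s |x|)`, so the damped function tends to zero
uniformly as `|Re z| → ∞`; Cauchy's theorem on rectangles whose vertical sides recede to infinity
then shows that its integrals over the two lines agree. As `ε → 0⁺` these integrals converge to
those of `f` by dominated convergence, the factor being bounded by `exp (t²)` on `ℝ - i t` for
`ε ≤ 1`.
-/

open Complex Set MeasureTheory Filter Topology
open scoped Interval

theorem IsCompact.bddAbove_image_of_forall_nhdsWithin {X α : Type*} [TopologicalSpace X]
    [Preorder α] [IsDirectedOrder α] [Nonempty α] {K : Set X} {f : X → α} (hK : IsCompact K)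
    (hf : ∀ x ∈ K, ∃ t ∈ 𝓝[K] x, BddAbove (f '' t)) : BddAbove (f '' K) :=
  hK.induction_on (p := fun s => BddAbove (f '' s)) (by simp)
    (fun _ _ hst ht => ht.mono (image_mono hst))
    (fun _ _ hs ht => by simpa only [image_union] using hs.union ht) hf

theorem bddAbove_image_of_locally_bddAbove_Ioo {C : ℝ → ℝ} {a b : ℝ} {K : Set ℝ}
    (hC : ∀ t ∈ Ioo a b, ∃ ε > 0, ∃ M : ℝ, ∀ t' ∈ Ioo a b, |t' - t| < ε → C t' ≤ M)
    (hK : IsCompact K) (hKab : K ⊆ Ioo a b) : BddAbove (C '' K) := by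
  refine hK.bddAbove_image_of_forall_nhdsWithin fun t ht => ?_
  obtain ⟨ε, hε, M, hM⟩ := hC t (hKab ht)
  refine ⟨Ioo a b ∩ Metric.ball t ε, mem_nhdsWithin_of_mem_nhds ?_, M, ?_⟩
  · exact inter_mem (isOpen_Ioo.mem_nhds (hKab ht)) (Metric.ball_mem_nhds t hε)
  · rintro _ ⟨t', ⟨ht'ab, ht'ε⟩, rfl⟩
    exact hM t' ht'ab ht'ε

theorem sq_le_sq_add_sq_of_mem_uIcc {t t₁ t₂ : ℝ} (ht : t ∈ [[t₁, t₂]]) :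
    t ^ 2 ≤ t₁ ^ 2 + t₂ ^ 2 := by
  rcases mem_uIcc.mp ht with ⟨h₁, h₂⟩ | ⟨h₁, h₂⟩ <;>
    nlinarith [mul_nonneg (sub_nonneg.2 h₁) (sub_nonneg.2 h₂), sq_nonneg (t₁ + t₂)]

theorem tendsto_exp_mul_sub_mul_sq_atTop (s : ℝ) {ε : ℝ} (hε : 0 < ε) :
    Tendsto (fun r => Real.exp (s * r - ε * r ^ 2)) atTop (𝓝 0) := by
  refine Real.tendsto_exp_atBot.comp ?_
  have : Tendsto (fun r : ℝ => r * (ε * r - s)) atTop atTop :=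
    tendsto_id.atTop_mul_atTop₀ <| tendsto_atTop_add_const_right _ _ <|
      (tendsto_const_mul_atTop_of_pos hε).mpr tendsto_id
  exact (tendsto_neg_atTop_atBot.comp this).congr fun r => by simp only [Function.comp_apply]; ring

theorem norm_cexp_neg_mul_sq_sub_mul_I (ε x t : ℝ) :
    ‖cexp (-ε * (x - t * I) ^ 2)‖ = Real.exp (-ε * (x ^ 2 - t ^ 2)) := by
  rw [Complex.norm_exp]
  congr 1
  simp [sq, Complex.mul_re]

theorem norm_cexp_neg_mul_sq_sub_mul_I_le {ε : ℝ} (hε : 0 ≤ ε) (x t : ℝ) :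
    ‖cexp (-ε * (x - t * I) ^ 2)‖ ≤ Real.exp (ε * t ^ 2) := by
  rw [norm_cexp_neg_mul_sq_sub_mul_I, Real.exp_le_exp]
  nlinarith [sq_nonneg x]

theorem norm_cexp_neg_mul_sq_mul_le {f : ℂ → ℂ} {ε s M T x t : ℝ} (hε : 0 ≤ ε)
    (ht : t ^ 2 ≤ T) (hf : ‖f (x - t * I)‖ ≤ M * Real.exp (s * |x|)) :
    ‖cexp (-ε * (x - t * I) ^ 2) * f (x - t * I)‖
      ≤ M * Real.exp (ε * T) * Real.exp (s * |x| - ε * |x| ^ 2) := by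
  rw [norm_mul, norm_cexp_neg_mul_sq_sub_mul_I]
  calc Real.exp (-ε * (x ^ 2 - t ^ 2)) * ‖f (x - t * I)‖
      ≤ Real.exp (-ε * (x ^ 2 - T)) * (M * Real.exp (s * |x|)) :=
        mul_le_mul (Real.exp_le_exp.2 (by nlinarith)) hf (norm_nonneg _) (Real.exp_nonneg _)
    _ = M * Real.exp (ε * T) * Real.exp (s * |x| - ε * |x| ^ 2) := by
        rw [sq_abs, mul_assoc, mul_left_comm, ← Real.exp_add, ← Real.exp_add]
        ring_nf

theorem integrable_cexp_neg_mul_sq_mul {f : ℂ → ℂ} {ε t : ℝ} (hε : 0 ≤ ε)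
    (hf : Integrable fun x : ℝ => f (x - t * I)) :
    Integrable fun x : ℝ => cexp (-ε * (x - t * I) ^ 2) * f (x - t * I) :=
  hf.bdd_mul (by fun_prop) (.of_forall fun x => norm_cexp_neg_mul_sq_sub_mul_I_le hε x t)

theorem tendsto_integral_cexp_neg_mul_sq_mul {f : ℂ → ℂ} {t : ℝ}
    (hf : Integrable fun x : ℝ => f (x - t * I)) :
    Tendsto (fun ε : ℝ => ∫ x : ℝ, cexp (-ε * (x - t * I) ^ 2) * f (x - t * I)) (𝓝[>] 0)
      (𝓝 (∫ x : ℝ, f (x - t * I))) := by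
  refine tendsto_integral_filter_of_dominated_convergence
    (fun x => Real.exp (t ^ 2) * ‖f (x - t * I)‖) (.of_forall fun ε =>
      (by fun_prop : Continuous fun x : ℝ => cexp (-ε * (x - t * I) ^ 2)).aestronglyMeasurable.mul
        hf.1) ?_
    (hf.norm.const_mul _) (.of_forall fun x => ?_)
  · filter_upwards [Ioc_mem_nhdsGT zero_lt_one] with ε ⟨hε₀, hε₁⟩
    refine .of_forall fun x => ?_
    rw [norm_mul]
    gcongr
    refine (norm_cexp_neg_mul_sq_sub_mul_I_le hε₀.le x t).trans ?_
    gcongr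
    nlinarith [sq_nonneg t]
  · refine tendsto_nhdsWithin_of_tendsto_nhds ?_
    simpa using ((by fun_prop : Continuous fun ε : ℝ =>
      cexp (-ε * (x - t * I) ^ 2) * f (x - t * I)).tendsto 0)

theorem neg_mem_uIcc_of_mem_uIcc_neg {α : Type*} [AddCommGroup α] [LinearOrder α]
    [IsOrderedAddMonoid α] {a b y : α} (hy : y ∈ [[-a, -b]]) : -y ∈ [[a, b]] := by
  obtain ⟨u, hu, rfl⟩ := image_neg_uIcc (a := a) (b := b) ▸ hy
  simpa using hu

section Contour

variable {E : Type*} [NormedAddCommGroup E] [NormedSpace ℂ E]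
  {g : ℂ → E} {B : ℝ → ℝ} {t₁ t₂ : ℝ}

theorem tendsto_integral_vertical_of_norm_le {l : Filter ℝ} (hl : Tendsto (|·|) l atTop)
    (hB : Tendsto B atTop (𝓝 0)) (hgB : ∀ x : ℝ, ∀ t ∈ [[t₁, t₂]], ‖g (x - t * I)‖ ≤ B |x|) :
    Tendsto (fun r : ℝ => ∫ y in -t₁..-t₂, g (r + y * I)) l (𝓝 0) := by
  have hbound (r : ℝ) : ‖∫ y in -t₁..-t₂, g (r + y * I)‖ ≤ B |r| * |-t₂ - -t₁| :=
    intervalIntegral.norm_integral_le_of_norm_le_const fun y hy => by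
      have hy' : -y ∈ [[t₁, t₂]] := neg_mem_uIcc_of_mem_uIcc_neg (uIoc_subset_uIcc hy)
      simpa using hgB r (-y) hy'
  refine squeeze_zero_norm hbound ?_
  simpa using (hB.comp hl).mul_const |-t₂ - -t₁|

theorem integral_sub_mul_I_eq_of_norm_le [CompleteSpace E]
    (hg : DifferentiableOn ℂ g {z | -z.im ∈ [[t₁, t₂]]})
    (hB : Tendsto B atTop (𝓝 0)) (hgB : ∀ x : ℝ, ∀ t ∈ [[t₁, t₂]], ‖g (x - t * I)‖ ≤ B |x|)
    (h₁ : Integrable fun x : ℝ => g (x - t₁ * I)) (h₂ : Integrable fun x : ℝ => g (x - t₂ * I)) :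
    ∫ x : ℝ, g (x - t₁ * I) = ∫ x : ℝ, g (x - t₂ * I) := by
  have hrect (R : ℝ) : (∫ x in -R..R, g (x - t₁ * I)) - (∫ x in -R..R, g (x - t₂ * I)) +
      I • (∫ y in -t₁..-t₂, g (R + y * I)) - I • (∫ y in -t₁..-t₂, g (-R + y * I)) = 0 := by
    have := integral_boundary_rect_eq_zero_of_differentiableOn g (-R - t₁ * I) (R - t₂ * I)
      (hg.mono fun z hz => neg_mem_uIcc_of_mem_uIcc_neg (by simpa using hz.2))
    simpa [sub_eq_add_neg] using this
  have hV := tendsto_integral_vertical_of_norm_le tendsto_abs_atTop_atTop hB hgB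
  have hV' := (tendsto_integral_vertical_of_norm_le tendsto_abs_atBot_atTop hB hgB).comp
    tendsto_neg_atTop_atBot
  have hH₁ := intervalIntegral_tendsto_integral h₁ tendsto_neg_atTop_atBot tendsto_id
  have hH₂ := intervalIntegral_tendsto_integral h₂ tendsto_neg_atTop_atBot tendsto_id
  have hlim := ((hH₁.sub hH₂).add (hV.const_smul I)).sub (hV'.const_smul I)
  rw [smul_zero, add_zero, sub_zero] at hlim
  exact sub_eq_zero.mp <| tendsto_nhds_unique hlim <|
    tendsto_const_nhds.congr fun R => by simpa [Function.comp_def] using (hrect R).symm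

end Contour

theorem strip_integral_eq_general (a b s t₁ t₂ : ℝ) (C : ℝ → ℝ) (f : ℂ → ℂ)
    (hf : DifferentiableOn ℂ f {z : ℂ | z.im ∈ Set.Ioo (-b) (-a)})
    (hC : ∀ t ∈ Set.Ioo a b, ∃ ε > 0, ∃ M : ℝ, ∀ t' ∈ Set.Ioo a b,
      |t' - t| < ε → C t' ≤ M)
    (hgrowth : ∀ (x : ℝ), ∀ t ∈ Set.Ioo a b,
      ‖f (x - t * Complex.I)‖ ≤ C t * Real.exp (s * |x|))
    (ht₁ : t₁ ∈ Set.Ioo a b) (ht₂ : t₂ ∈ Set.Ioo a b)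
    (hint₁ : Integrable (fun x : ℝ => f (x - t₁ * Complex.I)))
    (hint₂ : Integrable (fun x : ℝ => f (x - t₂ * Complex.I))) :
    (∫ x : ℝ, f (x - t₁ * Complex.I)) = ∫ x : ℝ, f (x - t₂ * Complex.I) := by
  have hsub : [[t₁, t₂]] ⊆ Ioo a b := ordConnected_Ioo.uIcc_subset ht₁ ht₂
  obtain ⟨M, hM⟩ := bddAbove_image_of_locally_bddAbove_Ioo hC isCompact_uIcc hsub
  have hfM (x t : ℝ) (ht : t ∈ [[t₁, t₂]]) : ‖f (x - t * I)‖ ≤ M * Real.exp (s * |x|) :=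
    (hgrowth x t (hsub ht)).trans <|
      mul_le_mul_of_nonneg_right (hM (mem_image_of_mem C ht)) (Real.exp_nonneg _)
  have hstrip : {z : ℂ | -z.im ∈ [[t₁, t₂]]} ⊆ {z : ℂ | z.im ∈ Ioo (-b) (-a)} := fun z hz => by
    have := hsub hz
    constructor <;> linarith [this.1, this.2]
  have hdamped (ε : ℝ) (hε : 0 < ε) :
      ∫ x : ℝ, cexp (-ε * (x - t₁ * I) ^ 2) * f (x - t₁ * I)
        = ∫ x : ℝ, cexp (-ε * (x - t₂ * I) ^ 2) * f (x - t₂ * I) :=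
    integral_sub_mul_I_eq_of_norm_le (g := fun z => cexp (-ε * z ^ 2) * f z)
      (B := fun r => M * Real.exp (ε * (t₁ ^ 2 + t₂ ^ 2)) * Real.exp (s * r - ε * r ^ 2))
      ((by fun_prop : Differentiable ℂ fun z => cexp (-ε * z ^ 2)).differentiableOn.mul
        (hf.mono hstrip))
      (by simpa using (tendsto_exp_mul_sub_mul_sq_atTop s hε).const_mul _)
      (fun x t ht => norm_cexp_neg_mul_sq_mul_le hε.le (sq_le_sq_add_sq_of_mem_uIcc ht)
        (hfM x t ht))
      (integrable_cexp_neg_mul_sq_mul hε.le hint₁) (integrable_cexp_neg_mul_sq_mul hε.le hint₂)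
  exact tendsto_nhds_unique
    ((tendsto_integral_cexp_neg_mul_sq_mul hint₁).congr'
      (eventually_nhdsWithin_of_forall (s := Ioi 0) hdamped))
    (tendsto_integral_cexp_neg_mul_sq_mul hint₂)

/-- If `f` is holomorphic on the strip `Ω_{a,b} = {x - i t : x ∈ ℝ, t ∈ (a,b)}`,
of exponential type there (with a locally bounded constant `C`), and Lebesgue
integrable on two horizontal lines `ℝ - i t₁`, `ℝ - i t₂` of the strip, then the
integrals over these two lines coincide. -/
theorem strip_integral_eq (a b s t₁ t₂ : ℝ) (C : ℝ → ℝ) (f : ℂ → ℂ)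
    (hab : a < b)
    (hf : DifferentiableOn ℂ f {z : ℂ | z.im ∈ Set.Ioo (-b) (-a)})
    (hC : ∀ t ∈ Set.Ioo a b, ∃ ε > 0, ∃ M : ℝ, ∀ t' ∈ Set.Ioo a b,
      |t' - t| < ε → C t' ≤ M)
    (hgrowth : ∀ (x : ℝ), ∀ t ∈ Set.Ioo a b,
      ‖f (x - t * Complex.I)‖ ≤ C t * Real.exp (s * |x|))
    (ht₁ : t₁ ∈ Set.Ioo a b) (ht₂ : t₂ ∈ Set.Ioo a b)
    (hint₁ : Integrable (fun x : ℝ => f (x - t₁ * Complex.I)))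
    (hint₂ : Integrable (fun x : ℝ => f (x - t₂ * Complex.I))) :
    (∫ x : ℝ, f (x - t₁ * Complex.I)) = ∫ x : ℝ, f (x - t₂ * Complex.I) :=
  strip_integral_eq_general a b s t₁ t₂ C f hf hC hgrowth ht₁ ht₂ hint₁ hint₂
end

section
/- For all complex numbers z₁ and z₂, |Im √(z₁ + z₂)| ≤ |Im √z₁| + |Im √z₂|, where √ denotes the principal branch of the complex square root. -/
open Complex

/-! `|Im √z| = √((‖z‖ - Re z) / 2)`, and `z ↦ ‖z‖ - Re z` is nonnegative and subadditive by the
triangle inequality; subadditivity of the real square root finishes the proof. -/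

lemma Real.sqrt_add_le_sqrt_add_sqrt {a b : ℝ} (ha : 0 ≤ a) (hb : 0 ≤ b) :
    √(a + b) ≤ √a + √b := by
  simpa only [Real.sqrt_eq_rpow] using
    Real.rpow_add_le_add_rpow ha hb (by norm_num) (by norm_num : (1 / 2 : ℝ) ≤ 1)

lemma Complex.norm_sub_re_nonneg (z : ℂ) : 0 ≤ ‖z‖ - z.re :=
  sub_nonneg.2 (re_le_norm z)

lemma Complex.norm_sub_re_add_le (z w : ℂ) :
    ‖z + w‖ - (z + w).re ≤ (‖z‖ - z.re) + (‖w‖ - w.re) := by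
  rw [add_re]
  linarith [norm_add_le z w]

/-- For the principal branch of the complex square root,
`|Im √(z₁ + z₂)| ≤ |Im √z₁| + |Im √z₂|`. -/
theorem abs_im_sqrt_add_le (z₁ z₂ : ℂ) :
    |((z₁ + z₂) ^ (1 / 2 : ℂ)).im| ≤ |(z₁ ^ (1 / 2 : ℂ)).im| + |(z₂ ^ (1 / 2 : ℂ)).im| := by
  simp only [one_div, abs_cpow_inv_two_im]
  calc √((‖z₁ + z₂‖ - (z₁ + z₂).re) / 2)
      ≤ √((‖z₁‖ - z₁.re) / 2 + (‖z₂‖ - z₂.re) / 2) := by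
        apply Real.sqrt_le_sqrt
        linarith [norm_sub_re_add_le z₁ z₂]
    _ ≤ √((‖z₁‖ - z₁.re) / 2) + √((‖z₂‖ - z₂.re) / 2) :=
        Real.sqrt_add_le_sqrt_add_sqrt (by linarith [norm_sub_re_nonneg z₁])
          (by linarith [norm_sub_re_nonneg z₂])
end

section
/- Let f be locally integrable on (0, ∞), b > 0, and n ≥ 0. If the function x ↦ e^{-bx}(1 + |x|)^n f(x) belongs to L¹(0, ∞), then the function x ↦ e^{-bx}(1 + |x|)^n ∫₀ˣ f(t) dt also belongs to L¹(0, ∞). -/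
/-!
The weight `w x = e^{-bx} (1 + |x|)^n` is submultiplicative, `w (t + s) ≤ w t * w s`, so for `x > 0`
`w x * ∫₀ˣ |f| ≤ ∫₀ˣ w t |f t| w (x - t) dt = (g ⋆ h) x` with `g = 1_{(0,∞)} w |f|` and
`h = 1_{[0,∞)} w`. Both are in `L¹(ℝ)` (`h` because exponential decay beats polynomial growth),
so by Young's inequality `g ⋆ h ∈ L¹(ℝ)`, and it dominates the weighted primitive.
-/

open MeasureTheory Set Real Filter Asymptotics
open scoped Convolution

noncomputable def expPolyWeight (b n x : ℝ) : ℝ := exp (-b * x) * (1 + |x|) ^ n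

section expPolyWeight

variable {b n : ℝ}

theorem expPolyWeight_pos (b n x : ℝ) : 0 < expPolyWeight b n x := by
  unfold expPolyWeight; positivity

theorem continuous_expPolyWeight (b n : ℝ) : Continuous (expPolyWeight b n) :=
  (continuous_const.mul continuous_id).rexp.mul
    ((continuous_const.add continuous_abs).rpow_const fun x =>
      Or.inl (add_pos_of_pos_of_nonneg one_pos (abs_nonneg x)).ne')

theorem expPolyWeight_add_le_mul (b : ℝ) (hn : 0 ≤ n) (t s : ℝ) :
    expPolyWeight b n (t + s) ≤ expPolyWeight b n t * expPolyWeight b n s := by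
  have hpow : (1 + |t + s|) ^ n ≤ (1 + |t|) ^ n * (1 + |s|) ^ n := by
    rw [← mul_rpow (by positivity) (by positivity)]
    gcongr
    nlinarith [abs_add_le t s, mul_nonneg (abs_nonneg t) (abs_nonneg s)]
  calc expPolyWeight b n (t + s) ≤ exp (-b * (t + s)) * ((1 + |t|) ^ n * (1 + |s|) ^ n) := by
        unfold expPolyWeight; gcongr
    _ = expPolyWeight b n t * expPolyWeight b n s := by
        unfold expPolyWeight; rw [mul_add, exp_add]; ring

theorem expPolyWeight_isBigO (hb : 0 < b) (n : ℝ) :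
    expPolyWeight b n =O[atTop] fun x => exp (-(b / 2) * x) := by
  have hpow : (fun x : ℝ => (1 + |x|) ^ n) =O[atTop] fun x => exp (b / 2 * x) := by
    have h := (isLittleO_rpow_exp_pos_mul_atTop n (half_pos hb)).isBigO.comp_tendsto
      (tendsto_atTop_add_const_left atTop 1 tendsto_id)
    have hshift : (fun x : ℝ => exp (b / 2 * (1 + x))) =
        fun x => exp (b / 2) * exp (b / 2 * x) := by
      ext x; rw [← exp_add]; ring_nf
    refine IsBigO.congr' (h.trans ?_) ?_ EventuallyEq.rfl
    · simpa [Function.comp_def, hshift] using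
        (isBigO_refl (fun x => exp (b / 2 * x)) atTop).const_mul_left (exp (b / 2))
    · filter_upwards [eventually_ge_atTop 0] with x hx
      simp [abs_of_nonneg hx]
  refine ((isBigO_refl (fun x => exp (-b * x)) atTop).mul hpow).congr_right fun x => ?_
  rw [← exp_add]; ring_nf

theorem integrableOn_expPolyWeight_Ici (hb : 0 < b) (n a : ℝ) :
    IntegrableOn (expPolyWeight b n) (Ici a) :=
  (integrableOn_Ici_iff_integrableOn_Ioi).mpr <| integrable_of_isBigO_exp_neg (half_pos hb)
    (continuous_expPolyWeight b n).continuousOn (expPolyWeight_isBigO hb n)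

end expPolyWeight

theorem integrableOn_Ioc_of_integrableOn_Ioi_mul {w f : ℝ → ℝ} (hw : Continuous w)
    (hw₀ : ∀ x, w x ≠ 0) {a : ℝ} (h : IntegrableOn (fun x => w x * f x) (Ioi a)) (x : ℝ) :
    IntegrableOn f (Ioc a x) := by
  have : IntegrableOn (fun t => (w t)⁻¹ * (w t * f t)) (Ioc a x) :=
    (h.mono_set Ioc_subset_Ioi_self).continuousOn_mul_of_subset (hw.inv₀ hw₀).continuousOn
      isCompact_Icc measurableSet_Ioc Ioc_subset_Icc_self
  simpa [inv_mul_cancel_left₀ (hw₀ _)] using this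

theorem continuousOn_Ioi_primitive_Ioc {E : Type*} [NormedAddCommGroup E] [NormedSpace ℝ E]
    {f : ℝ → E} {a : ℝ} (hf : ∀ x, IntegrableOn f (Ioc a x)) :
    ContinuousOn (fun x => ∫ t in Ioc a x, f t) (Ioi a) := fun x hx =>
  ((intervalIntegral.continuousOn_primitive
    ((integrableOn_Icc_iff_integrableOn_Ioc).2 (hf (x + 1)))).continuousAt
    (Icc_mem_nhds hx (lt_add_one x))).continuousWithinAt

theorem mul_integral_norm_le_convolution {w f : ℝ → ℝ} (hw : ∀ t, 0 ≤ w t)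
    (hmul : ∀ t s, 0 ≤ t → 0 ≤ s → w (t + s) ≤ w t * w s) {x : ℝ}
    (hf : IntegrableOn f (Ioc 0 x))
    (hx : ConvolutionExistsAt ((Ioi 0).indicator fun t => ‖w t * f t‖) ((Ici 0).indicator w) x
      (ContinuousLinearMap.mul ℝ ℝ)) :
    w x * ∫ t in Ioc 0 x, ‖f t‖ ≤
      ((Ioi 0).indicator (fun t => ‖w t * f t‖) ⋆[ContinuousLinearMap.mul ℝ ℝ]
        (Ici 0).indicator w) x := by
  set g := (Ioi (0 : ℝ)).indicator fun t => ‖w t * f t‖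
  set k := (Ici (0 : ℝ)).indicator w
  have hslice : Integrable fun t => g t * k (x - t) := by simpa using hx.integrable
  have hpt : ∀ t ∈ Ioc 0 x, w x * ‖f t‖ ≤ g t * k (x - t) := by
    rintro t ⟨ht, htx⟩
    simp only [g, k]
    rw [indicator_of_mem (mem_Ioi.2 ht), indicator_of_mem (mem_Ici.2 (sub_nonneg.2 htx)),
      norm_mul, Real.norm_of_nonneg (hw t)]
    calc w x * ‖f t‖ ≤ w t * w (x - t) * ‖f t‖ := by
          gcongr; simpa using hmul t (x - t) ht.le (sub_nonneg.2 htx)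
      _ = w t * ‖f t‖ * w (x - t) := by ring
  calc w x * ∫ t in Ioc 0 x, ‖f t‖ = ∫ t in Ioc 0 x, w x * ‖f t‖ := (integral_const_mul _ _).symm
    _ ≤ ∫ t in Ioc 0 x, g t * k (x - t) :=
      setIntegral_mono_on (hf.norm.const_mul _) hslice.integrableOn measurableSet_Ioc hpt
    _ ≤ ∫ t, g t * k (x - t) :=
      setIntegral_le_integral hslice <| .of_forall fun t =>
        mul_nonneg (indicator_nonneg (fun _ _ => norm_nonneg _) t)
          (indicator_nonneg (fun s _ => hw s) _)
    _ = (g ⋆[ContinuousLinearMap.mul ℝ ℝ] k) x := by simp [convolution_def]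

theorem weighted_primitive_integrable_general (f : ℝ → ℝ) (b n : ℝ) (hb : 0 < b) (hn : 0 ≤ n)
    (hf : IntegrableOn (fun x : ℝ => Real.exp (-b * x) * (1 + |x|) ^ n * f x) (Set.Ioi 0)) :
    IntegrableOn
      (fun x : ℝ => Real.exp (-b * x) * (1 + |x|) ^ n * ∫ t in Set.Ioc (0 : ℝ) x, f t)
      (Set.Ioi 0) := by
  set w := expPolyWeight b n
  change IntegrableOn (fun x => w x * f x) _ at hf
  change IntegrableOn (fun x => w x * ∫ t in Ioc 0 x, f t) _
  have hw := continuous_expPolyWeight b n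
  have hfi := integrableOn_Ioc_of_integrableOn_Ioi_mul hw (fun x => (expPolyWeight_pos b n x).ne') hf
  set L := ContinuousLinearMap.mul ℝ ℝ
  have hg : Integrable ((Ioi 0).indicator fun t => ‖w t * f t‖) :=
    (integrable_indicator_iff measurableSet_Ioi).2 hf.norm
  have hk : Integrable ((Ici 0).indicator w) :=
    (integrable_indicator_iff measurableSet_Ici).2 (integrableOn_expPolyWeight_Ici hb n 0)
  refine (hg.integrable_convolution L hk).integrableOn.mono'
    (hw.aestronglyMeasurable.restrict.mul
      ((continuousOn_Ioi_primitive_Ioc hfi).aestronglyMeasurable measurableSet_Ioi)) ?_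
  filter_upwards [ae_restrict_of_ae (hg.ae_convolution_exists L hk)] with x hx
  calc ‖w x * ∫ t in Ioc 0 x, f t‖ ≤ w x * ∫ t in Ioc 0 x, ‖f t‖ := by
        rw [norm_mul, Real.norm_of_nonneg (expPolyWeight_pos b n x).le]
        exact mul_le_mul_of_nonneg_left (norm_integral_le_integral_norm _)
          (expPolyWeight_pos b n x).le
    _ ≤ _ := mul_integral_norm_le_convolution (fun t => (expPolyWeight_pos b n t).le)
        (fun t s _ _ => expPolyWeight_add_le_mul b hn t s) (hfi x) hx

/-- If `f` is locally integrable on `(0,∞)`, `b > 0`, `n ≥ 0`, and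
`x ↦ e^{-bx}(1+|x|)^n f x` is in `L¹(0,∞)`, then
`x ↦ e^{-bx}(1+|x|)^n ∫₀ˣ f` is also in `L¹(0,∞)`. -/
theorem weighted_primitive_integrable (f : ℝ → ℝ) (b n : ℝ) (hb : 0 < b) (hn : 0 ≤ n)
    (hloc : LocallyIntegrableOn f (Set.Ioi 0))
    (hf : IntegrableOn (fun x : ℝ => Real.exp (-b * x) * (1 + |x|) ^ n * f x) (Set.Ioi 0)) :
    IntegrableOn
      (fun x : ℝ => Real.exp (-b * x) * (1 + |x|) ^ n * ∫ t in Set.Ioc (0 : ℝ) x, f t)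
      (Set.Ioi 0) :=
  weighted_primitive_integrable_general f b n hb hn hf
end
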